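/- For every pair of derivations E, E' in the restricted closure L̄ of ad(L), the universal enveloping algebras U(L_E) and U(L_{E'}) are isomorphic as associative 𝕜-algebras. -/

import Mathlib

universe u v w

open Module

attribute [local instance 100] LieRing.ofAssociativeRing

/-- The restricted closure of `ad(L)`: the smallest Lie subalgebra of `End(L)` consisting of
derivations of `L` (i.e. a Lie subalgebra of `Der(L)`) which contains `ad(L)` and is closed
under the `p`-th power map `E ↦ E ^ p` (computed in `End(L)`). -/
def restrictedClosure (𝕜 : Type u) [Field 𝕜] (L : Type v) [LieRing L] [LieAlgebra 𝕜 L]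
    (p : ℕ) : LieSubalgebra 𝕜 (Module.End 𝕜 L) :=
  sInf {K : LieSubalgebra 𝕜 (Module.End 𝕜 L) |
    (∀ x : L, LieAlgebra.ad 𝕜 L x ∈ K) ∧ (∀ E ∈ K, E ^ p ∈ K) ∧
    ∀ E ∈ K, ∀ a b : L, E ⁅a, b⁆ = ⁅E a, b⁆ + ⁅a, E b⁆}

/-- A realization of the semidirect product `L_E = L ⋊ 𝕜·E` of a Lie algebra `L` by a
derivation `E` of `L`: a Lie algebra `g` together with an injective Lie algebra morphism
`incl : L → g` and an element `e ∉ incl(L)` such that `[e, incl x] = incl (E x)` for all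
`x ∈ L`, and such that `g` is spanned by `incl(L)` and `e`.  Any two realizations of `L_E`
are canonically isomorphic, so this characterizes `L_E` up to isomorphism. -/
structure SemidirectRealization (𝕜 : Type u) [Field 𝕜] (L : Type v) [LieRing L]
    [LieAlgebra 𝕜 L] (E : Module.End 𝕜 L) (g : Type w) [LieRing g] [LieAlgebra 𝕜 g] where
  incl : L →ₗ⁅𝕜⁆ g
  e : g
  injective : Function.Injective incl
  e_notMem : ∀ x : L, incl x ≠ e
  lie_e : ∀ x : L, ⁅e, incl x⁆ = incl (E x)
  spans : ∀ y : g, ∃ (x : L) (c : 𝕜), y = incl x + c • e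

/-!
Every element `D` of the restricted closure of `ad(L)` is induced on `L` by an inner derivation
`ad w` of `U(L)`: the set of such derivations is a Lie subalgebra, it contains `ad(L)`, and it is
closed under `p`-th powers because `(ad w)^p = ad (w^p)` in characteristic `p`. Take `w` inducing
`E - E'`. Then `x ↦ x`, `e ↦ e' + w` respects the relations of `L_E`, since
`[e' + w, x] = E' x + (E - E') x = E x`, so it extends to `U(L_E) → U(L_{E'})`; the map built
from `-w` in the other direction is its inverse.
-/

open UniversalEnvelopingAlgebra

section

variable {𝕜 : Type u} [Field 𝕜] {L : Type v} [LieRing L] [LieAlgebra 𝕜 L]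

lemma leibniz_pow_char {p : ℕ} [Fact p.Prime] [CharP 𝕜 p] (D : Module.End 𝕜 L)
    (hD : ∀ a b : L, D ⁅a, b⁆ = ⁅D a, b⁆ + ⁅a, D b⁆) (a b : L) :
    (D ^ p) ⁅a, b⁆ = ⁅(D ^ p) a, b⁆ + ⁅a, (D ^ p) b⁆ := by
  let D' : LieDerivation 𝕜 L L := ⟨D, fun a b => by rw [hD, ← lie_skew b (D a)]; abel⟩
  have hp : p.Prime := Fact.out
  have hchoose : ∀ i ∈ Finset.range (p + 1), i ≠ 0 ∧ i ≠ p →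
      p.choose i • ⁅D'^[i] a, D'^[p - i] b⁆ = 0 := fun i hmem hi => by
    obtain ⟨k, hk⟩ := hp.dvd_choose_self hi.1 (by grind)
    rw [hk, mul_smul, ← Nat.cast_smul_eq_nsmul 𝕜 p, CharP.cast_eq_zero, zero_smul]
  simp only [Module.End.pow_apply]
  rw [show ⇑D = ⇑D' from rfl, LieDerivation.iterate_apply_lie' D' p a b,
    Finset.sum_eq_add 0 p hp.ne_zero.symm hchoose]
  all_goals simp [D', add_comm]

lemma LieAlgebra.ad_pow_char {p : ℕ} [Fact p.Prime] [CharP 𝕜 p] {A : Type*} [Ring A]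
    [Algebra 𝕜 A] (w : A) : LieAlgebra.ad 𝕜 A w ^ p = LieAlgebra.ad 𝕜 A (w ^ p) := by
  cases subsingleton_or_nontrivial A
  · exact Subsingleton.elim _ _
  have : CharP (Module.End 𝕜 A) p :=
    charP_of_injective_algebraMap (algebraMap 𝕜 (Module.End 𝕜 A)).injective p
  rw [LieAlgebra.ad_eq_lmul_left_sub_lmul_right, Pi.sub_apply, Pi.sub_apply,
    sub_pow_char_of_commute _ (LinearMap.commute_mulLeft_right w w), LinearMap.pow_mulLeft,
    LinearMap.pow_mulRight]

variable (𝕜 L) in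
def envelopingInnerDerivations : LieSubalgebra 𝕜 (Module.End 𝕜 L) where
  carrier := {D | (∀ a b : L, D ⁅a, b⁆ = ⁅D a, b⁆ + ⁅a, D b⁆) ∧
    ∃ w : UniversalEnvelopingAlgebra 𝕜 L, ∀ x : L, ⁅w, ι 𝕜 x⁆ = ι 𝕜 (D x)}
  zero_mem' := ⟨by simp, 0, by simp⟩
  add_mem' := by
    rintro D₁ D₂ ⟨hD₁, w₁, hw₁⟩ ⟨hD₂, w₂, hw₂⟩
    refine ⟨fun a b => ?_, w₁ + w₂, fun x => by
      rw [add_lie, hw₁, hw₂, LinearMap.add_apply, map_add]⟩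
    simp only [LinearMap.add_apply, hD₁, hD₂, add_lie, lie_add]
    abel
  smul_mem' := by
    rintro c D ⟨hD, w, hw⟩
    exact ⟨fun a b => by simp [hD], c • w, fun x => by
      rw [smul_lie, hw, LinearMap.smul_apply, map_smul]⟩
  lie_mem' := by
    rintro D₁ D₂ ⟨hD₁, w₁, hw₁⟩ ⟨hD₂, w₂, hw₂⟩
    have hbr : ∀ x : L, ⁅D₁, D₂⁆ x = D₁ (D₂ x) - D₂ (D₁ x) := fun x => by
      simp [LieRing.of_associative_ring_bracket]
    refine ⟨fun a b => ?_, ⁅w₁, w₂⁆, fun x => by rw [lie_lie, hw₂, hw₁, hw₁, hw₂, hbr, map_sub]⟩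
    simp only [hbr, hD₁, hD₂, map_add, lie_sub, sub_lie]
    abel

lemma restrictedClosure_le_envelopingInnerDerivations (p : ℕ) [Fact p.Prime] [CharP 𝕜 p] :
    restrictedClosure 𝕜 L p ≤ envelopingInnerDerivations 𝕜 L := by
  refine sInf_le ⟨fun x => ⟨leibniz_lie x, ι 𝕜 x, fun y => ((ι 𝕜).map_lie x y).symm⟩, ?_,
    fun D hD => hD.1⟩
  rintro D ⟨hD, w, hw⟩
  refine ⟨leibniz_pow_char D hD, w ^ p, fun x => ?_⟩
  have hcomm : (LieAlgebra.ad 𝕜 _ w).comp (ι 𝕜 : L →ₗ⁅𝕜⁆ _).toLinearMap =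
      (ι 𝕜 : L →ₗ⁅𝕜⁆ _).toLinearMap.comp D := LinearMap.ext hw
  simpa [LieAlgebra.ad_pow_char] using
    LinearMap.congr_fun (Module.End.commute_pow_left_of_commute hcomm p) x

lemma lie_add_smul_lie_add_smul {E : Module.End 𝕜 L} {M : Type*} [LieRing M] [LieAlgebra 𝕜 M]
    (j : L →ₗ⁅𝕜⁆ M) (t : M) (ht : ∀ x : L, ⁅t, j x⁆ = j (E x)) (x₁ x₂ : L) (c₁ c₂ : 𝕜) :
    ⁅j x₁ + c₁ • t, j x₂ + c₂ • t⁆ = j (⁅x₁, x₂⁆ + c₁ • E x₂ - c₂ • E x₁) := by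
  simp only [add_lie, lie_add, smul_lie, lie_smul, lie_self, ht, ← lie_skew (j x₁) t, map_add,
    map_sub, map_smul, LieHom.map_lie]
  module

namespace SemidirectRealization

variable {E : Module.End 𝕜 L} {g : Type*} [LieRing g] [LieAlgebra 𝕜 g]
  (r : SemidirectRealization 𝕜 L E g)

lemma eq_zero_of_incl_add_smul_eq_zero {x : L} {c : 𝕜} (h : r.incl x + c • r.e = 0) :
    x = 0 ∧ c = 0 := by
  obtain rfl | hc := eq_or_ne c 0
  · rw [zero_smul, add_zero, ← map_zero r.incl] at h
    exact ⟨r.injective h, rfl⟩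
  · refine absurd ?_ (r.e_notMem (-c⁻¹ • x))
    rw [map_smul, eq_comm, ← smul_right_inj hc, smul_smul, mul_neg, mul_inv_cancel₀ hc,
      neg_one_smul, eq_neg_iff_add_eq_zero, add_comm, h]

noncomputable def linearEquiv : (L × 𝕜) ≃ₗ[𝕜] g :=
  LinearEquiv.ofBijective (r.incl.toLinearMap.coprod (LinearMap.toSpanSingleton 𝕜 g r.e))
    ⟨(injective_iff_map_eq_zero _).2 fun v hv => Prod.ext_iff.2
      (r.eq_zero_of_incl_add_smul_eq_zero (by simpa using hv)),
    fun y => by obtain ⟨x, c, rfl⟩ := r.spans y; exact ⟨(x, c), by simp⟩⟩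

lemma linearEquiv_apply (x : L) (c : 𝕜) : r.linearEquiv (x, c) = r.incl x + c • r.e := rfl

lemma linearEquiv_symm_apply (x : L) (c : 𝕜) :
    r.linearEquiv.symm (r.incl x + c • r.e) = (x, c) := by
  rw [← linearEquiv_apply, LinearEquiv.symm_apply_apply]

lemma linearEquiv_symm_apply_incl (x : L) : r.linearEquiv.symm (r.incl x) = (x, 0) := by
  rw [← r.linearEquiv_symm_apply, zero_smul, add_zero]

variable {M : Type*} [LieRing M] [LieAlgebra 𝕜 M]

/-- The universal property of `L_E`. -/
noncomputable def lieHom (j : L →ₗ⁅𝕜⁆ M) (t : M) (ht : ∀ x : L, ⁅t, j x⁆ = j (E x)) :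
    g →ₗ⁅𝕜⁆ M where
  toLinearMap :=
    (j.toLinearMap.coprod (LinearMap.toSpanSingleton 𝕜 M t)).comp r.linearEquiv.symm.toLinearMap
  map_lie' {y z} := by
    obtain ⟨x₁, c₁, rfl⟩ := r.spans y
    obtain ⟨x₂, c₂, rfl⟩ := r.spans z
    simp only [AddHom.toFun_eq_coe, LinearMap.coe_toAddHom, LinearMap.comp_apply,
      LinearEquiv.coe_coe]
    rw [lie_add_smul_lie_add_smul r.incl r.e r.lie_e, linearEquiv_symm_apply_incl,
      linearEquiv_symm_apply, linearEquiv_symm_apply]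
    simp only [LinearMap.coprod_apply, LieHom.coe_toLinearMap, LinearMap.toSpanSingleton_apply,
      zero_smul, add_zero, lie_add_smul_lie_add_smul j t ht]

lemma lieHom_apply (j : L →ₗ⁅𝕜⁆ M) (t : M) (ht : ∀ x : L, ⁅t, j x⁆ = j (E x)) (x : L) (c : 𝕜) :
    r.lieHom j t ht (r.incl x + c • r.e) = j x + c • t := by
  change LinearMap.comp _ _ _ = _
  simp only [LinearMap.comp_apply, LinearEquiv.coe_coe, linearEquiv_symm_apply]
  simp

variable {E' : Module.End 𝕜 L} {g' : Type*} [LieRing g'] [LieAlgebra 𝕜 g']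
  (r' : SemidirectRealization 𝕜 L E' g')

noncomputable def envelopingMap :
    UniversalEnvelopingAlgebra 𝕜 L →ₐ[𝕜] UniversalEnvelopingAlgebra 𝕜 g :=
  lift 𝕜 ((ι 𝕜).comp r.incl)

lemma envelopingMap_ι (x : L) : r.envelopingMap (ι 𝕜 x) = ι 𝕜 (r.incl x) :=
  lift_ι_apply 𝕜 _ x

lemma lie_envelopingMap_ι {D : Module.End 𝕜 L} {w : UniversalEnvelopingAlgebra 𝕜 L}
    (hw : ∀ x : L, ⁅w, ι 𝕜 x⁆ = ι 𝕜 (D x)) (x : L) :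
    ⁅r.envelopingMap w, ι 𝕜 (r.incl x)⁆ = ι 𝕜 (r.incl (D x)) := by
  rw [← envelopingMap_ι, ← envelopingMap_ι, ← hw]
  exact (r.envelopingMap.toLieHom.map_lie w (ι 𝕜 x)).symm

lemma lie_ι_e (x : L) : ⁅ι 𝕜 r.e, ι 𝕜 (r.incl x)⁆ = ι 𝕜 (r.incl (E x)) := by
  rw [← LieHom.map_lie, r.lie_e]

noncomputable def envelopingAlgHom (w : UniversalEnvelopingAlgebra 𝕜 L)
    (hw : ∀ x : L, ⁅w, ι 𝕜 x⁆ = ι 𝕜 ((E - E') x)) :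
    UniversalEnvelopingAlgebra 𝕜 g →ₐ[𝕜] UniversalEnvelopingAlgebra 𝕜 g' :=
  lift 𝕜 <| r.lieHom ((ι 𝕜).comp r'.incl) (ι 𝕜 r'.e + r'.envelopingMap w) fun x => by
    rw [LieHom.comp_apply, add_lie, r'.lie_ι_e, r'.lie_envelopingMap_ι hw, ← map_add, ← map_add,
      LinearMap.sub_apply, add_sub_cancel, LieHom.comp_apply]

variable {r r'} {w : UniversalEnvelopingAlgebra 𝕜 L} {hw : ∀ x : L, ⁅w, ι 𝕜 x⁆ = ι 𝕜 ((E - E') x)}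

lemma envelopingAlgHom_ι_incl (x : L) :
    envelopingAlgHom r r' w hw (ι 𝕜 (r.incl x)) = ι 𝕜 (r'.incl x) := by
  rw [envelopingAlgHom, lift_ι_apply, ← add_zero (r.incl x), ← zero_smul 𝕜 r.e, lieHom_apply,
    zero_smul, add_zero, LieHom.comp_apply]

lemma envelopingAlgHom_ι_e :
    envelopingAlgHom r r' w hw (ι 𝕜 r.e) = ι 𝕜 r'.e + r'.envelopingMap w := by
  rw [envelopingAlgHom, lift_ι_apply, ← zero_add r.e, ← map_zero r.incl, ← one_smul 𝕜 r.e,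
    lieHom_apply, map_zero, one_smul, zero_add]

lemma envelopingAlgHom_envelopingMap (u : UniversalEnvelopingAlgebra 𝕜 L) :
    envelopingAlgHom r r' w hw (r.envelopingMap u) = r'.envelopingMap u := by
  rw [← AlgHom.comp_apply]
  congr 1
  refine hom_ext 𝕜 (LieHom.ext fun x => ?_)
  simp only [LieHom.comp_apply, AlgHom.coe_toLieHom, AlgHom.comp_apply, envelopingMap_ι,
    envelopingAlgHom_ι_incl]

lemma envelopingAlgHom_comp_envelopingAlgHom {w' : UniversalEnvelopingAlgebra 𝕜 L}
    {hw' : ∀ x : L, ⁅w', ι 𝕜 x⁆ = ι 𝕜 ((E' - E) x)} (hww' : w + w' = 0) :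
    (envelopingAlgHom r' r w' hw').comp (envelopingAlgHom r r' w hw) = AlgHom.id 𝕜 _ := by
  refine hom_ext 𝕜 (LieHom.ext fun y => ?_)
  obtain ⟨x, c, rfl⟩ := r.spans y
  simp only [LieHom.comp_apply, AlgHom.coe_toLieHom, AlgHom.comp_apply,
    AlgHom.id_apply, map_add, map_smul, envelopingAlgHom_ι_incl, envelopingAlgHom_ι_e,
    envelopingAlgHom_envelopingMap]
  rw [add_assoc, ← map_add, add_comm w', hww', map_zero, add_zero]

variable (r r') in
noncomputable def envelopingAlgEquiv (w : UniversalEnvelopingAlgebra 𝕜 L)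
    (hw : ∀ x : L, ⁅w, ι 𝕜 x⁆ = ι 𝕜 ((E - E') x)) :
    UniversalEnvelopingAlgebra 𝕜 g ≃ₐ[𝕜] UniversalEnvelopingAlgebra 𝕜 g' :=
  have hw' (x : L) : ⁅-w, ι 𝕜 x⁆ = ι 𝕜 ((E' - E) x) := by
    rw [neg_lie, hw, ← map_neg, ← LinearMap.neg_apply, neg_sub]
  AlgEquiv.ofAlgHom (envelopingAlgHom r r' w hw) (envelopingAlgHom r' r (-w) hw')
    (envelopingAlgHom_comp_envelopingAlgHom (neg_add_cancel w))
    (envelopingAlgHom_comp_envelopingAlgHom (add_neg_cancel w))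

end SemidirectRealization

end

theorem stmt14 (p : ℕ) (hp : 0 < p)
    (𝕜 : Type u) [Field 𝕜] [CharP 𝕜 p]
    (L : Type v) [LieRing L] [LieAlgebra 𝕜 L]
    (E E' : Module.End 𝕜 L)
    (hE : E ∈ restrictedClosure 𝕜 L p) (hE' : E' ∈ restrictedClosure 𝕜 L p)
    (gE : Type w) [LieRing gE] [LieAlgebra 𝕜 gE]
    (gE' : Type w) [LieRing gE'] [LieAlgebra 𝕜 gE']
    (r : SemidirectRealization 𝕜 L E gE) (r' : SemidirectRealization 𝕜 L E' gE') :
    Nonempty (UniversalEnvelopingAlgebra 𝕜 gE ≃ₐ[𝕜] UniversalEnvelopingAlgebra 𝕜 gE') := by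
  have : NeZero p := ⟨hp.ne'⟩
  have := CharP.char_is_prime_of_pos 𝕜 p
  obtain ⟨-, w, hw⟩ := restrictedClosure_le_envelopingInnerDerivations p (sub_mem hE hE')
  exact ⟨r.envelopingAlgEquiv r' w hw⟩
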